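/- Let T ∈ ℕ and consider a deterministic array (p_t, c_t)_{t=0}^{T} with p_t ∈ ℝ^L_{++} and c_t ∈ ℝ^L_+ \ {0}. The array is R-rationalizable if and only if there exist scalars λ_t > 0 and v_t > 0 for t ∈ {0,…,T} such that v_t − v_s ≥ λ_t p_tᵀ (c_t − c_s) for all t, s ∈ {0,…,T}. -/

import Mathlib

open MeasureTheory Filter Topology Finset

noncomputable section

/-- Vectors in ℝ^L with the Euclidean norm. -/
abbrev Vec (L : ℕ) := EuclideanSpace ℝ (Fin L)

/-- Inner product (dot product) of two vectors. -/
def dotp {L : ℕ} (p c : Vec L) : ℝ := ∑ j, p j * c j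

/-- Componentwise nonnegative vectors: the set ℝ^L_+. -/
def NonnegV {L : ℕ} (c : Vec L) : Prop := ∀ j, 0 ≤ c j

/-- The consumption space ℝ^L_+ \ {0}. -/
def ConsV {L : ℕ} (c : Vec L) : Prop := NonnegV c ∧ c ≠ 0

/-- Componentwise strictly positive vectors: the set ℝ^L_{++}. -/
def PosV {L : ℕ} (p : Vec L) : Prop := ∀ j, 0 < p j

/-- Concavity of u on its domain ℝ^L_+. -/
def IsConcaveNN {L : ℕ} (u : Vec L → ℝ) : Prop :=
  ∀ c c' : Vec L, NonnegV c → NonnegV c' → ∀ a : ℝ, 0 ≤ a → a ≤ 1 →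
    a * u c + (1 - a) * u c' ≤ u (a • c + (1 - a) • c')

/-- Local nonsatiation of u on its domain ℝ^L_+. -/
def LocallyNonsatiatedNN {L : ℕ} (u : Vec L → ℝ) : Prop :=
  ∀ c : Vec L, NonnegV c → ∀ ε : ℝ, 0 < ε →
    ∃ c' : Vec L, NonnegV c' ∧ ‖c' - c‖ < ε ∧ u c < u c'

/-- Continuity of u on its domain ℝ^L_+. -/
def ContinuousNN {L : ℕ} (u : Vec L → ℝ) : Prop := ContinuousOn u {c | NonnegV c}

/-- A concave, locally nonsatiated, continuous utility function on ℝ^L_+. -/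
def NiceUtility {L : ℕ} (u : Vec L → ℝ) : Prop :=
  IsConcaveNN u ∧ LocallyNonsatiatedNN u ∧ ContinuousNN u

/-- ξ is a supergradient of u at c: u(c') − u(c) ≤ ξᵀ(c'−c) for all c' ∈ ℝ^L_+ \ {0}. -/
def Supergrad {L : ℕ} (u : Vec L → ℝ) (c ξ : Vec L) : Prop :=
  ∀ c' : Vec L, ConsV c' → u c' - u c ≤ dotp ξ (c' - c)

/-- R-rationalizability: there exist a nice utility u and income levels y_t > 0 such that
each c_t maximizes u over {c ∈ ℝ^L_+ : p_tᵀ c = y_t}. -/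
def RRat {L T : ℕ} (p c : Fin (T + 1) → Vec L) : Prop :=
  ∃ u : Vec L → ℝ, ∃ y : Fin (T + 1) → ℝ,
    NiceUtility u ∧ (∀ t, 0 < y t) ∧
    ∀ t, dotp (p t) (c t) = y t ∧
      ∀ z : Vec L, NonnegV z → dotp (p t) z = y t → u z ≤ u (c t)

/-! Afriat's theorem. If `u` rationalizes the data, fix `t` and compare `c_t` with the finitely
many other bundles along the budget hyperplane of `p_t`: by local nonsatiation and compactness
of the budget set the cheaper bundles are strictly worse, and by concavity the chord from a
cheaper to a dearer bundle crosses the hyperplane no higher than `u (c_t)`. So the slopes of utility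
against expenditure towards the cheaper bundles are positive and dominate those towards the
dearer ones, and any `λ_t` in between works, with `v_t = u (c_t)` shifted to be positive.
Conversely, the Afriat inequalities say exactly that the concave, continuous, strictly
increasing function `z ↦ min_t (v_t + λ_t p_tᵀ (z - c_t))` takes the value `v_t` at `c_t`, and it
is at most `v_t` on the `t`-th budget hyperplane. -/

variable {L : ℕ}

lemma dotp_eq_inner (p z : Vec L) : dotp p z = inner ℝ p z := by
  simp [dotp, PiLp.inner_apply, mul_comm]

lemma dotp_sub (p x y : Vec L) : dotp p (x - y) = dotp p x - dotp p y := by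
  simp [dotp_eq_inner, inner_sub_right]

lemma dotp_add (p x y : Vec L) : dotp p (x + y) = dotp p x + dotp p y := by
  simp [dotp_eq_inner, inner_add_right]

lemma dotp_smul_add_smul (p x y : Vec L) (a b : ℝ) :
    dotp p (a • x + b • y) = a * dotp p x + b * dotp p y := by
  simp [dotp_eq_inner, inner_add_right, inner_smul_right]

lemma dotp_single (p : Vec L) (j : Fin L) (a : ℝ) :
    dotp p (PiLp.single 2 j a) = p j * a := by
  simp [dotp, PiLp.single_apply]

lemma continuous_dotp (p : Vec L) : Continuous (dotp p) :=
  (continuous_const.inner continuous_id).congr fun z => (dotp_eq_inner p z).symm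

lemma dotp_pos {p z : Vec L} (hp : PosV p) (hz : ConsV z) : 0 < dotp p z := by
  obtain ⟨j, hj⟩ : ∃ j, z j ≠ 0 := by
    by_contra! h
    exact hz.2 (by ext j; simpa using h j)
  exact Finset.sum_pos' (fun i _ => mul_nonneg (hp i).le (hz.1 i))
    ⟨j, Finset.mem_univ j, mul_pos (hp j) ((hz.1 j).lt_of_ne' hj)⟩

lemma isClosed_setOf_nonnegV : IsClosed {w : Vec L | NonnegV w} := by
  simp only [NonnegV, Set.ofPred_forall]
  exact isClosed_iInter fun j => isClosed_le continuous_const (PiLp.continuous_apply 2 _ j)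

def budgetSet (p : Vec L) (y : ℝ) : Set (Vec L) := {w | NonnegV w ∧ dotp p w ≤ y}

lemma isCompact_budgetSet {p : Vec L} (hp : PosV p) (y : ℝ) : IsCompact (budgetSet p y) := by
  have hbox : budgetSet p y ⊆ WithLp.toLp 2 '' Set.Icc 0 (fun j => y / p j) := by
    refine fun w ⟨hw, hwy⟩ => ⟨WithLp.ofLp w, ⟨hw, fun j => ?_⟩, rfl⟩
    rw [le_div_iff₀' (hp j)]
    refine le_trans ?_ hwy
    exact Finset.single_le_sum (f := fun i => p i * w i)
      (fun i _ => mul_nonneg (hp i).le (hw i)) (Finset.mem_univ j)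
  exact (isCompact_Icc.image (PiLp.continuous_toLp 2 _)).of_isClosed_subset
    (isClosed_setOf_nonnegV.inter (isClosed_le (continuous_dotp p) continuous_const)) hbox

section Demand

variable {u : Vec L → ℝ} {p : Vec L}

lemma dotp_eq_of_isMaxOn_budgetSet (hu : LocallyNonsatiatedNN u) {y : ℝ} {w : Vec L}
    (hw : w ∈ budgetSet p y) (hmax : IsMaxOn u (budgetSet p y) w) : dotp p w = y := by
  by_contra hne
  have hlt : dotp p w < y := lt_of_le_of_ne hw.2 hne
  obtain ⟨ε, hε, hball⟩ := Metric.mem_nhds_iff.1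
    ((isOpen_lt (continuous_dotp p) continuous_const).mem_nhds hlt)
  obtain ⟨w', hw', hdist, hgt⟩ := hu w hw.1 ε hε
  have hw'K : w' ∈ budgetSet p y := ⟨hw', (hball (mem_ball_iff_norm.2 hdist)).le⟩
  exact (hmax hw'K).not_gt hgt

lemma lt_of_dotp_lt_of_maximizes (hu : LocallyNonsatiatedNN u) (hcont : ContinuousNN u)
    (hp : PosV p) {x : Vec L} (hx : NonnegV x)
    (hmax : ∀ z, NonnegV z → dotp p z = dotp p x → u z ≤ u x)
    {z : Vec L} (hz : NonnegV z) (hzx : dotp p z < dotp p x) : u z < u x := by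
  set K := budgetSet p (dotp p x)
  obtain ⟨w, hwK, hw⟩ := (isCompact_budgetSet hp _).exists_isMaxOn ⟨x, hx, le_rfl⟩
    (hcont.mono fun _ h => h.1)
  have hwx : u w ≤ u x := hmax w hwK.1 (dotp_eq_of_isMaxOn_budgetSet hu hwK hw)
  -- `u` peaks over the compact budget set on its boundary plane, so at `x`; a point `z` off the
  -- plane that is as good as `x` would be another peak.
  by_contra! hxz
  have hzmax : IsMaxOn u K z := fun a ha => (hw ha).trans (hwx.trans hxz)
  exact hzx.ne (dotp_eq_of_isMaxOn_budgetSet hu ⟨hz, hzx.le⟩ hzmax)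

/-- Concavity on the chord from `z₁` to `z₂`, which crosses the budget plane of `x` at a point
no better than `x`. -/
lemma chord_le_of_maximizes (hconc : IsConcaveNN u) {x : Vec L}
    (hmax : ∀ z, NonnegV z → dotp p z = dotp p x → u z ≤ u x)
    {z₁ z₂ : Vec L} (hz₁ : NonnegV z₁) (hz₂ : NonnegV z₂)
    (h₁ : dotp p z₁ < dotp p x) (h₂ : dotp p x < dotp p z₂) :
    (dotp p x - dotp p z₁) * (u z₂ - u x) ≤ (dotp p z₂ - dotp p x) * (u x - u z₁) := by
  set a := (dotp p z₂ - dotp p x) / (dotp p z₂ - dotp p z₁)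
  have hd : 0 < dotp p z₂ - dotp p z₁ := by linarith
  have ha₀ : 0 ≤ a := div_nonneg (by linarith) hd.le
  have ha₁ : a ≤ 1 := (div_le_one hd).2 (by linarith)
  have hw : NonnegV (a • z₁ + (1 - a) • z₂) := fun j => by
    simpa using add_nonneg (mul_nonneg ha₀ (hz₁ j)) (mul_nonneg (sub_nonneg.2 ha₁) (hz₂ j))
  have hwx : dotp p (a • z₁ + (1 - a) • z₂) = dotp p x := by
    rw [dotp_smul_add_smul]
    simp only [a]
    field_simp
    ring
  have hconcave := (hconc z₁ z₂ hz₁ hz₂ a ha₀ ha₁).trans (hmax _ hw hwx)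
  have key := mul_le_mul_of_nonneg_left hconcave hd.le
  simp only [a] at key
  field_simp at key
  linarith

end Demand

lemma exists_pos_slope_le {ι : Type*} [Finite ι] (m U : ι → ℝ) (y V : ℝ)
    (heq : ∀ s, m s = y → U s ≤ V) (hlt : ∀ s, m s < y → U s < V)
    (hchord : ∀ s s', m s < y → y < m s' → (y - m s) * (U s' - V) ≤ (m s' - y) * (V - U s)) :
    ∃ l > 0, ∀ s, l * (y - m s) ≤ V - U s := by
  -- `hchord` says that the slopes from `(y, V)` to the points on the right of `y` lie below
  -- the (positive) slopes to those on its left; take `l` in between.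
  set left := {s | m s < y}
  set right := {s | y < m s}
  obtain ⟨l, hl, hleft, hright⟩ : ∃ l > 0, (∀ s ∈ left, l * (y - m s) ≤ V - U s) ∧
      ∀ s ∈ right, U s - V ≤ l * (m s - y) := by
    rcases left.eq_empty_or_nonempty with hempty | hne
    · obtain ⟨M, hM⟩ := ((Set.toFinite right).image fun s => (U s - V) / (m s - y)).bddAbove
      refine ⟨max M 1, by positivity, by simp [hempty], fun s hs => ?_⟩
      rw [← div_le_iff₀ (sub_pos.2 hs)]
      exact (hM ⟨s, hs, rfl⟩).trans (le_max_left _ _)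
    · obtain ⟨s₀, hs₀, hmin⟩ := Set.exists_min_image left (fun s => (V - U s) / (y - m s))
        (Set.toFinite _) hne
      refine ⟨(V - U s₀) / (y - m s₀), div_pos (sub_pos.2 (hlt s₀ hs₀)) (sub_pos.2 hs₀),
        fun s hs => (le_div_iff₀ (sub_pos.2 hs)).1 (hmin s hs), fun s hs => ?_⟩
      rw [div_mul_eq_mul_div, le_div_iff₀ (sub_pos.2 hs₀)]
      linarith [hchord s₀ s hs₀ hs]
  refine ⟨l, hl, fun s => ?_⟩
  rcases lt_trichotomy (m s) y with h | h | h
  · exact hleft s h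
  · simpa [h] using heq s h
  · linarith [hright s h]

lemma exists_afriat_multiplier {ι : Type*} [Finite ι] {u : Vec L → ℝ} (hu : NiceUtility u)
    {p : Vec L} (hp : PosV p) {c : ι → Vec L} (hc : ∀ s, NonnegV (c s)) {x : Vec L}
    (hx : NonnegV x) (hmax : ∀ z, NonnegV z → dotp p z = dotp p x → u z ≤ u x) :
    ∃ l > 0, ∀ s, l * dotp p (x - c s) ≤ u x - u (c s) := by
  obtain ⟨hconc, hlns, hcont⟩ := hu
  simp only [dotp_sub]
  exact exists_pos_slope_le (fun s => dotp p (c s)) (fun s => u (c s)) _ _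
    (fun s hs => hmax _ (hc s) hs)
    (fun s hs => lt_of_dotp_lt_of_maximizes hlns hcont hp hx hmax (hc s) hs)
    (fun s s' hs hs' => chord_le_of_maximizes hconc hmax (hc s) (hc s') hs hs')

section Afriat

variable {ι : Type*} [Fintype ι] [Nonempty ι]

def afriatUtility (lam v : ι → ℝ) (p c : ι → Vec L) (z : Vec L) : ℝ :=
  Finset.univ.inf' Finset.univ_nonempty fun t => v t + lam t * dotp (p t) (z - c t)

lemma afriatUtility_le (lam v : ι → ℝ) (p c : ι → Vec L) (z : Vec L) (t : ι) :
    afriatUtility lam v p c z ≤ v t + lam t * dotp (p t) (z - c t) :=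
  Finset.inf'_le _ (Finset.mem_univ t)

variable {lam v : ι → ℝ} {p c : ι → Vec L}

lemma afriatUtility_apply_self (hA : ∀ t s, v t - v s ≥ lam t * dotp (p t) (c t - c s))
    (s : ι) : afriatUtility lam v p c (c s) = v s := by
  refine le_antisymm (by simpa [dotp] using afriatUtility_le lam v p c (c s) s)
    (Finset.le_inf' _ _ fun t _ => ?_)
  have h := hA t s
  rw [dotp_sub] at h ⊢
  linarith

lemma isConcaveNN_afriatUtility : IsConcaveNN (afriatUtility lam v p c) := by
  intro z₁ z₂ _ _ a ha₀ ha₁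
  refine Finset.le_inf' _ _ fun t _ => ?_
  have h₁ := mul_le_mul_of_nonneg_left (afriatUtility_le lam v p c z₁ t) ha₀
  have h₂ := mul_le_mul_of_nonneg_left (afriatUtility_le lam v p c z₂ t) (sub_nonneg.2 ha₁)
  simp only [dotp_sub, dotp_smul_add_smul] at h₁ h₂ ⊢
  nlinarith

lemma continuousNN_afriatUtility : ContinuousNN (afriatUtility lam v p c) :=
  (Continuous.finset_inf'_apply _ fun _ _ =>
    continuous_const.add (continuous_const.mul ((continuous_dotp _).comp
      (continuous_id.sub continuous_const)))).continuousOn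

lemma locallyNonsatiatedNN_afriatUtility (hL : L ≠ 0) (hlam : ∀ t, 0 < lam t)
    (hp : ∀ t, PosV (p t)) : LocallyNonsatiatedNN (afriatUtility lam v p c) := by
  intro z hz ε hε
  set j : Fin L := ⟨0, Nat.pos_of_ne_zero hL⟩
  set d : Vec L := PiLp.single 2 j (ε / 2)
  refine ⟨z + d, fun i => ?_, ?_, ?_⟩
  · by_cases hi : i = j <;> simp [d, hi, hz i]; linarith [hz j]
  · rw [add_sub_cancel_left, PiLp.norm_single, Real.norm_eq_abs, abs_of_pos (by linarith)]
    linarith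
  · obtain ⟨t, -, ht⟩ := Finset.exists_mem_eq_inf' Finset.univ_nonempty
      fun t => v t + lam t * dotp (p t) (z + d - c t)
    have hstep : 0 < lam t * dotp (p t) d := by
      rw [dotp_single]
      exact mul_pos (hlam t) (mul_pos (hp t j) (by linarith))
    calc afriatUtility lam v p c z ≤ v t + lam t * dotp (p t) (z - c t) := afriatUtility_le lam v p c z t
      _ < v t + lam t * dotp (p t) (z + d - c t) := by
        rw [add_sub_right_comm, dotp_add]
        linarith
      _ = afriatUtility lam v p c (z + d) := ht.symm

end Afriat

/-- the array (p_t, c_t) is R-rationalizable iff there exist λ_t > 0 and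
v_t > 0 such that v_t − v_s ≥ λ_t p_tᵀ (c_t − c_s) for all t, s. -/
theorem stmt_2 {L T : ℕ} (p c : Fin (T + 1) → Vec L)
    (hp : ∀ t, PosV (p t)) (hc : ∀ t, ConsV (c t)) :
    RRat p c ↔
      ∃ lam v : Fin (T + 1) → ℝ, (∀ t, 0 < lam t) ∧ (∀ t, 0 < v t) ∧
        ∀ t s, v t - v s ≥ lam t * dotp (p t) (c t - c s) := by
  constructor
  · rintro ⟨u, y, hu, -, hopt⟩
    have hmax : ∀ t z, NonnegV z → dotp (p t) z = dotp (p t) (c t) → u z ≤ u (c t) :=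
      fun t z hz h => (hopt t).2 z hz (h.trans (hopt t).1)
    choose lam hlam hineq using fun t =>
      exists_afriat_multiplier hu (hp t) (fun s => (hc s).1) (hc t).1 (hmax t)
    obtain ⟨s₀, hs₀⟩ := Finite.exists_min fun s => u (c s)
    refine ⟨lam, fun t => u (c t) - u (c s₀) + 1, hlam, fun t => by linarith [hs₀ t],
      fun t s => ?_⟩
    linarith [hineq t s]
  · rintro ⟨lam, v, hlam, -, hA⟩
    have hL : L ≠ 0 := by
      rintro rfl
      exact (hc 0).2 (by ext j; exact j.elim0)
    refine ⟨afriatUtility lam v p c, fun t => dotp (p t) (c t),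
      ⟨isConcaveNN_afriatUtility, locallyNonsatiatedNN_afriatUtility hL hlam hp,
        continuousNN_afriatUtility⟩, fun t => dotp_pos (hp t) (hc t),
      fun t => ⟨rfl, fun z _ hz => ?_⟩⟩
    rw [afriatUtility_apply_self hA]
    simpa [dotp_sub, hz] using afriatUtility_le lam v p c z t
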